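/- arXiv:2412.09947 — 4 statements merged into one kernel-verified Lean document; each statement's English description precedes it below -/
import Mathlib

section
/- Let E be a real inner product space and f : E → ℝ differentiable everywhere with L-Lipschitz gradient ∇f (L > 0). Assume f is bounded below by f* ∈ ℝ: f(x) ≥ f* for all x ∈ E. Let 0 < α < 2/L, set M = α − Lα²/2 (so M > 0), and define the gradient descent sequence θ⁰ ∈ E, θ^{k+1} = θ^k − α∇f(θ^k). Then for every T ≥ 1: (1/T) ∑_{k=0}^{T−1} ‖∇f(θ^k)‖² ≤ (f(θ⁰) − f*) / (M · T). -/
open Finset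

lemma descent_lemma
    {E : Type*} [NormedAddCommGroup E] [InnerProductSpace ℝ E]
    (f : E → ℝ) (g : E → E)
    (hf : ∀ x : E, HasFDerivAt f (innerSL ℝ (g x)) x)
    (L : ℝ) (hL : 0 ≤ L)
    (hlip : ∀ x y : E, ‖g x - g y‖ ≤ L * ‖x - y‖)
    (x v : E) :
    f (x + v) ≤ f x + inner ℝ (g x) v + L / 2 * ‖v‖ ^ 2 := by
  set φ : ℝ → ℝ := fun t =>
    f (x + t • v) - t * inner ℝ (g x) v - L * ‖v‖ ^ 2 * t ^ 2 / 2 with hφdef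
  have hφ : ∀ t : ℝ, HasDerivAt φ
      ((inner ℝ (g (x + t • v)) v : ℝ) - inner ℝ (g x) v - L * ‖v‖ ^ 2 * t) t := by
    intro t
    have h1 : HasDerivAt (fun t : ℝ => x + t • v) v t := by
      simpa using ((hasDerivAt_id t).smul_const v).const_add x
    have h2 : HasDerivAt (fun t : ℝ => f (x + t • v))
        ((inner ℝ (g (x + t • v)) v : ℝ)) t := by
      exact (hf (x + t • v)).comp_hasDerivAt t h1
    have h3 : HasDerivAt (fun t : ℝ => t * inner ℝ (g x) v) (inner ℝ (g x) v : ℝ) t := by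
      simpa using (hasDerivAt_id t).mul_const (inner ℝ (g x) v : ℝ)
    have h4 : HasDerivAt (fun t : ℝ => L * ‖v‖ ^ 2 * t ^ 2 / 2)
        (L * ‖v‖ ^ 2 * t) t := by
      have := ((hasDerivAt_pow 2 t).const_mul (L * ‖v‖ ^ 2)).div_const 2
      refine this.congr_deriv ?_
      ring
    exact (h2.sub h3).sub h4
  have hanti : AntitoneOn φ (Set.Icc 0 1) := by
    apply antitoneOn_of_deriv_nonpos (convex_Icc 0 1)
    · exact fun t _ => (hφ t).continuousAt.continuousWithinAt
    · intro t _
      exact (hφ t).differentiableAt.differentiableWithinAt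
    · intro t ht
      rw [(hφ t).deriv]
      rw [interior_Icc] at ht
      have h0 : (inner ℝ (g (x + t • v)) v : ℝ) - inner ℝ (g x) v
          = inner ℝ (g (x + t • v) - g x) v := by
        rw [inner_sub_left]
      rw [h0]
      have h1 : (inner ℝ (g (x + t • v) - g x) v : ℝ) ≤ ‖g (x + t • v) - g x‖ * ‖v‖ :=
        real_inner_le_norm _ _
      have h2 : ‖g (x + t • v) - g x‖ ≤ L * (t * ‖v‖) := by
        have := hlip (x + t • v) x
        simpa [norm_smul, abs_of_pos ht.1] using this
      nlinarith [norm_nonneg v, norm_nonneg (g (x + t • v) - g x), ht.1.le]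
  have h01 := hanti (Set.mem_Icc.mpr ⟨le_refl 0, zero_le_one⟩)
    (Set.mem_Icc.mpr ⟨zero_le_one, le_refl 1⟩) zero_le_one
  simp only [hφdef] at h01
  simp only [one_smul, zero_smul, add_zero, one_pow, one_mul, zero_mul, zero_pow] at h01
  linarith



/-- Averaged gradient bound for gradient descent (Equation 41 of the paper):
`(1/T) ∑_{k=0}^{T-1} ‖∇f(θ^k)‖² ≤ (f(θ⁰) - f*) / (M T)` with `M = α - Lα²/2`. -/
theorem gradient_descent_average_bound
    {E : Type*} [NormedAddCommGroup E] [InnerProductSpace ℝ E]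
    (f : E → ℝ) (g : E → E)
    (hf : ∀ x : E, HasFDerivAt f (innerSL ℝ (g x)) x)
    (L : ℝ) (hL : 0 < L)
    (hlip : ∀ x y : E, ‖g x - g y‖ ≤ L * ‖x - y‖)
    (fstar : ℝ) (hfstar : ∀ x : E, fstar ≤ f x)
    (α : ℝ) (hα0 : 0 < α) (hα2 : α < 2 / L)
    (M : ℝ) (hM : M = α - L * α ^ 2 / 2)
    (θ : ℕ → E) (hθ : ∀ k : ℕ, θ (k + 1) = θ k - α • g (θ k)) :
    ∀ T : ℕ, 1 ≤ T →
      (1 / (T : ℝ)) * ∑ k ∈ Finset.range T, ‖g (θ k)‖ ^ 2 ≤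
        (f (θ 0) - fstar) / (M * T) := by
  have hMpos : 0 < M := by
    have hαL : α * L < 2 := (lt_div_iff₀ hL).mp hα2
    nlinarith
  have step : ∀ k : ℕ, f (θ (k + 1)) ≤ f (θ k) - M * ‖g (θ k)‖ ^ 2 := by
    intro k
    have h := descent_lemma f g hf L hL.le hlip (θ k) (-(α • g (θ k)))
    have he : θ (k + 1) = θ k + -(α • g (θ k)) := by
      rw [hθ k]; abel
    rw [← he] at h
    have h1 : (inner ℝ (g (θ k)) (-(α • g (θ k))) : ℝ) = -(α * ‖g (θ k)‖ ^ 2) := by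
      rw [inner_neg_right, real_inner_smul_right, real_inner_self_eq_norm_sq]
    have h2 : ‖-(α • g (θ k))‖ ^ 2 = α ^ 2 * ‖g (θ k)‖ ^ 2 := by
      rw [norm_neg, norm_smul, Real.norm_eq_abs, mul_pow, sq_abs]
    rw [h1, h2] at h
    rw [hM]
    nlinarith [h]
  have telescope : ∀ T : ℕ, M * ∑ k ∈ Finset.range T, ‖g (θ k)‖ ^ 2 ≤ f (θ 0) - f (θ T) := by
    intro T
    induction T with
    | zero => simp
    | succ n ih =>
      rw [Finset.sum_range_succ, mul_add]
      have := step n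
      linarith
  intro T hT
  have hT' : (0 : ℝ) < T := by exact_mod_cast hT
  set S := ∑ k ∈ Finset.range T, ‖g (θ k)‖ ^ 2 with hS
  have hMS : M * S ≤ f (θ 0) - fstar := by
    have := telescope T
    have := hfstar (θ T)
    linarith
  rw [le_div_iff₀ (by positivity : (0 : ℝ) < M * T)]
  have heq : 1 / (T : ℝ) * S * (M * T) = M * S := by
    field_simp
  rw [heq]
  exact hMS
end

section
/- Let I ≥ 1 and D : Fin I → ℝ, and suppose b ∈ ℝ satisfies ∑_i max(0, −b − D_i) = 2. Define λ : Fin I → ℝ by λ_i = max(0, (−b − D_i)/2). Then: (1) λ_i ≥ 0 for all i and ∑_i λ_i = 1, i.e., λ lies in the probability simplex Δ; and (2) for every μ : Fin I → ℝ with μ_i ≥ 0 for all i and ∑_i μ_i = 1, one has ∑_i λ_i D_i + ∑_i λ_i² ≤ ∑_i μ_i D_i + ∑_i μ_i². -/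
/-! The objective has gradient `D i + 2 λ i = max (D i) (-b)` at the soft-threshold point, which equals
`-b` wherever `λ i > 0` and is at least `-b` where `λ i = 0`. Hence `⟨∇F(λ), μ - λ⟩ ≥ -b ∑ (μ i - λ i) = 0`
for every `μ` in the simplex, and since `F(μ) - F(λ) = ⟨∇F(λ), μ - λ⟩ + ‖μ - λ‖²` this proves optimality. -/

open Finset

namespace SoftThreshold

lemma mul_sub_le_grad_mul_sub (d t m : ℝ) (hm : 0 ≤ m) :
    t * (m - max 0 ((t - d) / 2)) ≤ (d + 2 * max 0 ((t - d) / 2)) * (m - max 0 ((t - d) / 2)) := by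
  rcases le_total (t - d) 0 with h | h
  · rw [max_eq_left (by linarith)]
    nlinarith
  · rw [max_eq_right (by linarith)]
    exact le_of_eq (by ring)

lemma mul_add_sq_add_mul_sub_le (d t m : ℝ) (hm : 0 ≤ m) :
    max 0 ((t - d) / 2) * d + max 0 ((t - d) / 2) ^ 2 + t * (m - max 0 ((t - d) / 2)) ≤
      m * d + m ^ 2 := by
  have hgrad := mul_sub_le_grad_mul_sub d t m hm
  nlinarith [sq_nonneg (m - max 0 ((t - d) / 2))]

lemma sum_mul_add_sum_sq_le {ι : Type*} [Fintype ι] (D μ : ι → ℝ) (t : ℝ) (hμ : ∀ i, 0 ≤ μ i)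
    (hmass : ∑ i, μ i = ∑ i, max 0 ((t - D i) / 2)) :
    ∑ i, max 0 ((t - D i) / 2) * D i + ∑ i, max 0 ((t - D i) / 2) ^ 2 ≤
      ∑ i, μ i * D i + ∑ i, μ i ^ 2 := by
  have hle := sum_le_sum fun i (_ : i ∈ univ) => mul_add_sq_add_mul_sub_le (D i) t (μ i) (hμ i)
  simpa only [sum_add_distrib, ← mul_sum, sum_sub_distrib, hmass, sub_self, mul_zero,
    add_zero] using hle

lemma sum_max_zero_div_two {ι : Type*} [Fintype ι] (x : ι → ℝ) :
    ∑ i, max 0 (x i / 2) = (∑ i, max 0 (x i)) / 2 := by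
  rw [sum_div]
  refine sum_congr rfl fun i _ => ?_
  rw [← max_div_div_right zero_le_two, zero_div]

end SoftThreshold

theorem kkt_solution_optimal_general
    (I : ℕ) (D : Fin I → ℝ)
    (b : ℝ) (hb : ∑ i, max 0 (-b - D i) = 2)
    (lam : Fin I → ℝ) (hlam : ∀ i, lam i = max 0 ((-b - D i) / 2)) :
    ((∀ i, 0 ≤ lam i) ∧ ∑ i, lam i = 1) ∧
      ∀ μ : Fin I → ℝ, (∀ i, 0 ≤ μ i) → ∑ i, μ i = 1 →
        ∑ i, lam i * D i + ∑ i, (lam i) ^ 2 ≤ ∑ i, μ i * D i + ∑ i, (μ i) ^ 2 := by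
  obtain rfl : lam = fun i => max 0 ((-b - D i) / 2) := funext hlam
  have hmass : ∑ i, max 0 ((-b - D i) / 2) = 1 := by
    rw [SoftThreshold.sum_max_zero_div_two fun i => -b - D i, hb]
    norm_num
  refine ⟨⟨fun i => le_max_left _ _, hmass⟩, fun μ hμ hμmass => ?_⟩
  exact SoftThreshold.sum_mul_add_sum_sq_le D μ (-b) hμ (hμmass.trans hmass.symm)

/-- Optimality of the KKT soft-threshold solution of the weight-update subproblem:
if `∑ i, max 0 (-b - D i) = 2` then `λ i = max 0 ((-b - D i)/2)` lies in the
probability simplex and minimizes `∑ i, λ i * D i + ∑ i, (λ i)²` over it. -/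
theorem kkt_solution_optimal
    (I : ℕ) (hI : 1 ≤ I) (D : Fin I → ℝ)
    (b : ℝ) (hb : ∑ i, max 0 (-b - D i) = 2)
    (lam : Fin I → ℝ) (hlam : ∀ i, lam i = max 0 ((-b - D i) / 2)) :
    ((∀ i, 0 ≤ lam i) ∧ ∑ i, lam i = 1) ∧
      ∀ μ : Fin I → ℝ, (∀ i, 0 ≤ μ i) → ∑ i, μ i = 1 →
        ∑ i, lam i * D i + ∑ i, (lam i) ^ 2 ≤ ∑ i, μ i * D i + ∑ i, (μ i) ^ 2 :=
  kkt_solution_optimal_general I D b hb lam hlam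
end

section
/- Let I ≥ 1 and D : Fin I → ℝ be nonincreasing (D_1 ≥ D_2 ≥ … ≥ D_I). Let j ∈ {1, …, I} and set b = −(2 + ∑_{i=j}^I D_i) / (I − j + 1). Assume b ≤ −D_j, and assume additionally that −D_{j−1} ≤ b in case j > 1. Then ∑_{i=1}^I max(0, −b − D_i) = 2. -/
/-!
By monotonicity of `D`, the bracket `-D (j - 1) ≤ b ≤ -D j` makes the terms with `i < j` vanish
and the terms with `i ≥ j` equal to `-b - D i`; and `-b` is precisely the value for which these
`I - j + 1` terms sum to `2`.
-/

open Finset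

theorem Finset.sum_max_zero_eq_sum_of_subset {ι α : Type*} [AddCommMonoid α] [LinearOrder α]
    {s t : Finset ι} (hts : t ⊆ s) {f : ι → α} (hpos : ∀ i ∈ t, 0 ≤ f i)
    (hnonpos : ∀ i ∈ s, i ∉ t → f i ≤ 0) :
    ∑ i ∈ s, max 0 (f i) = ∑ i ∈ t, f i := by
  rw [← Finset.sum_subset hts fun i hi hit ↦ max_eq_left (hnonpos i hi hit)]
  exact Finset.sum_congr rfl fun i hi ↦ max_eq_right (hpos i hi)

theorem Finset.sum_mean_shift_sub {ι 𝕜 : Type*} [Field 𝕜] [CharZero 𝕜] {t : Finset ι}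
    (ht : t.Nonempty) (D : ι → 𝕜) (a : 𝕜) :
    ∑ i ∈ t, ((a + ∑ k ∈ t, D k) / #t - D i) = a := by
  have hcard : (#t : 𝕜) ≠ 0 := Nat.cast_ne_zero.mpr ht.card_pos.ne'
  rw [Finset.sum_sub_distrib, Finset.sum_const, nsmul_eq_mul, mul_div_cancel₀ _ hcard]
  ring

theorem multiplier_closed_form_general
    (I : ℕ) (D : ℕ → ℝ)
    (hmono : ∀ i i' : ℕ, 1 ≤ i → i ≤ i' → i' ≤ I → D i' ≤ D i)
    (j : ℕ) (hj1 : 1 ≤ j) (hjI : j ≤ I)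
    (b : ℝ) (hb : b = -(2 + ∑ i ∈ Finset.Icc j I, D i) / ((I : ℝ) - (j : ℝ) + 1))
    (hbj : b ≤ -D j)
    (hbj' : 1 < j → -D (j - 1) ≤ b) :
    ∑ i ∈ Finset.Icc 1 I, max 0 (-b - D i) = 2 := by
  have hcard : (#(Icc j I) : ℝ) = I - j + 1 := by
    rw [Nat.card_Icc, Nat.cast_sub (by omega)]
    push_cast
    ring
  have hmean : -b = (2 + ∑ i ∈ Icc j I, D i) / #(Icc j I) := by
    rw [hb, hcard, neg_div, neg_neg]
  have hactive : ∀ i ∈ Icc j I, 0 ≤ -b - D i := fun i hi ↦ by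
    have := hmono j i hj1 (mem_Icc.mp hi).1 (mem_Icc.mp hi).2
    linarith
  have hinactive : ∀ i ∈ Icc 1 I, i ∉ Icc j I → -b - D i ≤ 0 := fun i hi hij ↦ by
    simp only [mem_Icc] at hi hij
    have := hmono i (j - 1) hi.1 (by omega) (by omega)
    linarith [hbj' (by omega)]
  calc ∑ i ∈ Icc 1 I, max 0 (-b - D i) = ∑ i ∈ Icc j I, (-b - D i) :=
        sum_max_zero_eq_sum_of_subset (Icc_subset_Icc_left hj1) hactive hinactive
    _ = 2 := by rw [hmean]; exact sum_mean_shift_sub (nonempty_Icc.mpr hjI) D 2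

/-- Closed-form Lagrange multiplier (Equation 23): if `D_1 ≥ D_2 ≥ … ≥ D_I` and
`b = -(2 + ∑_{i=j}^I D_i)/(I - j + 1)` lies in `[-D_{j-1}, -D_j]`, then
`∑_{i=1}^I max 0 (-b - D_i) = 2`. -/
theorem multiplier_closed_form
    (I : ℕ) (hI : 1 ≤ I) (D : ℕ → ℝ)
    (hmono : ∀ i i' : ℕ, 1 ≤ i → i ≤ i' → i' ≤ I → D i' ≤ D i)
    (j : ℕ) (hj1 : 1 ≤ j) (hjI : j ≤ I)
    (b : ℝ) (hb : b = -(2 + ∑ i ∈ Finset.Icc j I, D i) / ((I : ℝ) - (j : ℝ) + 1))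
    (hbj : b ≤ -D j)
    (hbj' : 1 < j → -D (j - 1) ≤ b) :
    ∑ i ∈ Finset.Icc 1 I, max 0 (-b - D i) = 2 :=
  multiplier_closed_form_general I D hmono j hj1 hjI b hb hbj hbj'
end

section
/- Let I ≥ 1 and D : Fin I → ℝ be nonincreasing (D_1 ≥ D_2 ≥ … ≥ D_I). Let j ∈ {1, …, I}, set S = ∑_{i'=j}^I D_{i'} and b = −(2 + S)/(I − j + 1), and assume b ≤ −D_j and, in case j > 1, that −D_{j−1} ≤ b. Define λ : Fin I → ℝ by λ_i = max(0, (2 + S − D_i · (I − j + 1)) / (2 · (I − j + 1))). Then: (1) λ_i ≥ 0 for all i and ∑_i λ_i = 1; and (2) for every μ : Fin I → ℝ with μ_i ≥ 0 for all i and ∑_i μ_i = 1, one has ∑_i λ_i D_i + ∑_i λ_i² ≤ ∑_i μ_i D_i + ∑_i μ_i². -/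
/-- The paper's explicit weight-update formula (Equation 24): with `D_1 ≥ … ≥ D_I`,
`S = ∑_{i'=j}^I D_{i'}` and `b = -(2 + S)/(I - j + 1)` lying in `[-D_{j-1}, -D_j]`,
the weights `λ i = max 0 ((2 + S - D i (I - j + 1)) / (2 (I - j + 1)))` lie in the
probability simplex and minimize `∑ i, λ i * D i + ∑ i, (λ i)²` over it. -/
theorem explicit_weight_update_optimal
    (I : ℕ) (hI : 1 ≤ I) (D : ℕ → ℝ)
    (hmono : ∀ i i' : ℕ, 1 ≤ i → i ≤ i' → i' ≤ I → D i' ≤ D i)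
    (j : ℕ) (hj1 : 1 ≤ j) (hjI : j ≤ I)
    (S : ℝ) (hS : S = ∑ i ∈ Finset.Icc j I, D i)
    (b : ℝ) (hb : b = -(2 + S) / ((I : ℝ) - (j : ℝ) + 1))
    (hbj : b ≤ -D j)
    (hbj' : 1 < j → -D (j - 1) ≤ b)
    (lam : ℕ → ℝ)
    (hlam : ∀ i : ℕ,
      lam i = max 0 ((2 + S - D i * ((I : ℝ) - (j : ℝ) + 1)) /
        (2 * ((I : ℝ) - (j : ℝ) + 1)))) :
    ((∀ i, 0 ≤ lam i) ∧ ∑ i ∈ Finset.Icc 1 I, lam i = 1) ∧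
      ∀ μ : ℕ → ℝ, (∀ i ∈ Finset.Icc 1 I, 0 ≤ μ i) →
        ∑ i ∈ Finset.Icc 1 I, μ i = 1 →
        ∑ i ∈ Finset.Icc 1 I, lam i * D i + ∑ i ∈ Finset.Icc 1 I, (lam i) ^ 2 ≤
          ∑ i ∈ Finset.Icc 1 I, μ i * D i + ∑ i ∈ Finset.Icc 1 I, (μ i) ^ 2 := by
  have hjIr : (j : ℝ) ≤ I := by exact_mod_cast hjI
  set n : ℝ := (I : ℝ) - (j : ℝ) + 1 with hn_def
  have hn : (0:ℝ) < n := by simp only [hn_def]; linarith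
  have hbn : -b * n = 2 + S := by
    rw [hb]; field_simp
  have hDj : D j ≤ -b := by linarith
  have hpos : ∀ i, 0 ≤ lam i := fun i => (hlam i) ▸ le_max_left _ _
  -- for i in [j, I], lam i has the explicit form
  have hkey1 : ∀ i ∈ Finset.Icc j I, lam i = (2 + S) / (2 * n) - D i / 2 := by
    intro i hi
    rw [Finset.mem_Icc] at hi
    have hDi : D i ≤ -b := le_trans (hmono j i hj1 hi.1 hi.2) hDj
    have hx : 0 ≤ (2 + S - D i * n) / (2 * n) := by
      apply div_nonneg _ (by linarith)
      nlinarith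
    rw [hlam i, max_eq_right hx]
    field_simp
  -- sum of lam over [1, I] equals sum over [j, I]
  have hsub : Finset.Icc j I ⊆ Finset.Icc 1 I := by
    apply Finset.Icc_subset_Icc hj1 le_rfl
  have hzero : ∀ i ∈ Finset.Icc 1 I, i ∉ Finset.Icc j I → lam i = 0 := by
    intro i hi hni
    rw [Finset.mem_Icc] at hi
    rw [Finset.mem_Icc, not_and_or] at hni
    have hij : i < j := by
      rcases hni with h | h
      · omega
      · omega
    have hj2 : 1 < j := by omega
    have hD1 : -b ≤ D i := by
      have h1 : D (j-1) ≤ D i := hmono i (j-1) hi.1 (by omega) (by omega)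
      have h2 := hbj' hj2
      linarith
    have hx : (2 + S - D i * n) / (2 * n) ≤ 0 := by
      apply div_nonpos_of_nonpos_of_nonneg _ (by linarith)
      nlinarith
    rw [hlam i, max_eq_left hx]
  have hsum1 : ∑ i ∈ Finset.Icc 1 I, lam i = 1 := by
    rw [← Finset.sum_subset hsub hzero]
    rw [Finset.sum_congr rfl hkey1, Finset.sum_sub_distrib, Finset.sum_const,
      Nat.card_Icc]
    have hcard : ((I + 1 - j : ℕ) : ℝ) = n := by
      rw [hn_def, Nat.cast_sub (by omega)]; push_cast; ring
    rw [nsmul_eq_mul, hcard, ← Finset.sum_div, ← hS]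
    field_simp
    ring
  refine ⟨⟨hpos, hsum1⟩, ?_⟩
  intro μ hμ0 hμ1
  -- per-index facts: g i := D i + 2 lam i + b is ≥ 0 on [1,I] and lam i * g i = 0
  have hg : ∀ i ∈ Finset.Icc 1 I, 0 ≤ D i + 2 * lam i + b ∧
      lam i * (D i + 2 * lam i + b) = 0 := by
    intro i hi
    rcases le_or_gt 0 ((2 + S - D i * n) / (2 * n)) with hx | hx
    · have hl : lam i = (2 + S - D i * n) / (2 * n) := by rw [hlam i, max_eq_right hx]
      have hg0 : D i + 2 * lam i + b = 0 := by
        rw [hl]; field_simp; nlinarith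
      constructor
      · linarith
      · rw [hg0]; ring
    · have hl : lam i = 0 := by rw [hlam i, max_eq_left hx.le]
      have hDi : -b ≤ D i := by
        have h1 : 2 + S - D i * n < 0 := by
          by_contra h
          push_neg at h
          have := div_nonneg h (by linarith : (0:ℝ) ≤ 2 * n)
          linarith
        nlinarith
      constructor
      · rw [hl]; linarith
      · rw [hl]; ring
  have hident : ∀ i ∈ Finset.Icc 1 I,
      μ i * D i + μ i ^ 2 - (lam i * D i + lam i ^ 2)
        = μ i * (D i + 2 * lam i + b) + b * lam i - b * μ i + (μ i - lam i) ^ 2 := by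
    intro i hi
    have h2 := (hg i hi).2
    nlinarith [h2]
  have main : 0 ≤ ∑ i ∈ Finset.Icc 1 I,
      (μ i * D i + μ i ^ 2 - (lam i * D i + lam i ^ 2)) := by
    rw [Finset.sum_congr rfl hident]
    have e : ∑ i ∈ Finset.Icc 1 I,
        (μ i * (D i + 2 * lam i + b) + b * lam i - b * μ i + (μ i - lam i) ^ 2)
        = (∑ i ∈ Finset.Icc 1 I, μ i * (D i + 2 * lam i + b))
          + b * (∑ i ∈ Finset.Icc 1 I, lam i) - b * (∑ i ∈ Finset.Icc 1 I, μ i)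
          + ∑ i ∈ Finset.Icc 1 I, (μ i - lam i) ^ 2 := by
      rw [Finset.mul_sum, Finset.mul_sum, ← Finset.sum_add_distrib,
        ← Finset.sum_sub_distrib, ← Finset.sum_add_distrib]
    rw [e, hsum1, hμ1]
    have t1 : 0 ≤ ∑ i ∈ Finset.Icc 1 I, μ i * (D i + 2 * lam i + b) :=
      Finset.sum_nonneg fun i hi => mul_nonneg (hμ0 i hi) (hg i hi).1
    have t2 : 0 ≤ ∑ i ∈ Finset.Icc 1 I, (μ i - lam i) ^ 2 :=
      Finset.sum_nonneg fun i _ => sq_nonneg _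
    linarith
  rw [Finset.sum_sub_distrib, Finset.sum_add_distrib, Finset.sum_add_distrib] at main
  linarith
end
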